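/- Let G be a connected semigraph with at least one edge and Laplacian eigenvalues 0 = λ₁ ≤ ... ≤ λ_n. Then λ_n ≤ max_{i∼j} { d_i + d_j − C(i,j) }, where the maximum runs over pairs of adjacent vertices i, j, d_i is the degree of vertex i, and C(i,j) = C_S(i,j) + (1/2)C_{1/2}(i,j) + (1/4)C_{1/4}(i,j) + Σ_{l≥2} l·C_l(i,j) counts weighted common neighbors of i and j. -/

import Mathlib

open Matrix BigOperators

/-- A semigraph on a finite vertex type `V`: edges are ordered tuples (lists) of
distinct vertices, of length at least 2, and any two distinct edges share at most
one vertex. -/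
structure Semigraph (V : Type) [Fintype V] [DecidableEq V] where
  edges : Finset (List V)
  nodup : ∀ e ∈ edges, e.Nodup
  two_le : ∀ e ∈ edges, 2 ≤ e.length
  inter : ∀ e₁ ∈ edges, ∀ e₂ ∈ edges, e₁ ≠ e₂ → (e₁.toFinset ∩ e₂.toFinset).card ≤ 1

namespace Semigraph

variable {V : Type} [Fintype V] [DecidableEq V] (G : Semigraph V)

/-- `v` is an end vertex of the edge `e`. -/
def IsEndOf (v : V) (e : List V) : Prop := e.head? = some v ∨ e.getLast? = some v

/-- `v` is a middle vertex of the edge `e`. -/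
def IsMiddleOf (v : V) (e : List V) : Prop := v ∈ e ∧ ¬ IsEndOf v e

/-- `v` is a middle end vertex: a middle vertex of some edge and an end vertex of
some (other) edge. -/
def IsMiddleEnd (v : V) : Prop :=
  (∃ e ∈ G.edges, IsMiddleOf v e) ∧ (∃ e ∈ G.edges, IsEndOf v e)

/-- `v` is a pure end vertex: it lies on some edge and is an end vertex of every
edge containing it. -/
def IsPureEnd (v : V) : Prop :=
  (∃ e ∈ G.edges, v ∈ e) ∧ ∀ e ∈ G.edges, v ∈ e → IsEndOf v e

open Classical in
/-- The adjacency weight contributed by the edge `e` to the pair of vertices `(u, v)`: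
the skeleton distance between `u` and `v` inside `e`, halved once for a partial half
edge at the head, and halved once for a partial half edge at the tail (so a quarter
edge gets weight `1/4`). -/
noncomputable def pairWeight (e : List V) (u v : V) : ℝ :=
  if u ∈ e ∧ v ∈ e ∧ u ≠ v then
    (Nat.dist (e.idxOf u) (e.idxOf v) : ℝ) *
      (if ({e.idxOf u, e.idxOf v} : Set ℕ) = {0, 1} ∧
          (∃ w, e.head? = some w ∧ G.IsMiddleEnd w) then (1:ℝ)/2 else 1) *
      (if ({e.idxOf u, e.idxOf v} : Set ℕ) = {e.length - 2, e.length - 1} ∧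
          (∃ w, e.getLast? = some w ∧ G.IsMiddleEnd w) then (1:ℝ)/2 else 1)
  else 0

/-- The adjacency matrix of a semigraph. -/
noncomputable def adj : Matrix V V ℝ :=
  fun u v => ∑ e ∈ G.edges, G.pairWeight e u v

/-- The degree of a vertex: the corresponding row sum of the adjacency matrix. -/
noncomputable def degree (v : V) : ℝ := ∑ u, G.adj v u

/-- The Laplacian matrix `L = D - A` of a semigraph. -/
noncomputable def lap : Matrix V V ℝ :=
  Matrix.diagonal G.degree - G.adj

/-- The Laplacian of a single edge, padded by zeros to an `n × n` matrix. -/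
noncomputable def edgeLap (e : List V) : Matrix V V ℝ :=
  fun u v => if u = v then ∑ w, G.pairWeight e u w else - G.pairWeight e u v

/-- Two vertices are adjacent if they lie on a common edge. -/
def Adjacent (u v : V) : Prop := u ≠ v ∧ ∃ e ∈ G.edges, u ∈ e ∧ v ∈ e

/-- A semigraph is connected if any two vertices are joined by a chain of edges. -/
def Connected : Prop :=
  ∀ u v : V, Relation.ReflTransGen (fun a b => ∃ e ∈ G.edges, a ∈ e ∧ b ∈ e) u v

end Semigraph

open Classical in
/-- The weighted count of common neighbours of `u` and `v`: a vertex `k` contributes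
the common adjacency weight when it is adjacent to both `u` and `v` with the same
weight (weight `1` for partial edges, `1/2` for partial half edges, `1/4` for quarter
edges, and `l` for vertices at skeleton distance `l` from each). -/
noncomputable def Semigraph.commonC {V : Type} [Fintype V] [DecidableEq V]
    (G : Semigraph V) (u v : V) : ℝ :=
  ∑ k ∈ Finset.univ \ {u, v}, if G.adj u k = G.adj v k then G.adj u k else 0

/-!
Let `x` be an eigenvector for `λ > 0` of a Laplacian with nonnegative weights `a`, scaled so
that its maximum `x i` is positive. Since `λ x i = ∑ₖ a i k (x i - x k) > 0`, the vertex `i`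
has a neighbour below it; let `j` be a neighbour of `i` minimising `x`. Adding the eigenvalue
equations at `i` and `j`, each `k` contributes `a i k (x i - x k) + a j k (x k - x j)`, which is
at most `max (a i k) (a j k) * (x i - x j)`, so `λ ≤ ∑ₖ max (a i k) (a j k)`. Finally
`∑ₖ max (a i k) (a j k) = d i + d j - ∑ₖ min (a i k) (a j k)`, and the common-neighbour count
`C(i, j)` only picks up those `k` where the minimum is attained by both weights.
-/

lemma mul_sub_add_mul_sub_le_max_mul {a b p q r : ℝ} (hb : 0 ≤ b) (hrp : r ≤ p) (hqp : q ≤ p)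
    (ha : q < r → a = 0) :
    a * (p - q) + b * (q - r) ≤ max a b * (p - r) := by
  rcases lt_or_ge q r with hqr | hrq
  · rw [ha hqr, zero_mul, zero_add]
    nlinarith [mul_nonneg (hb.trans (le_max_right 0 b)) (sub_nonneg.mpr hrp)]
  · nlinarith [le_max_left a b, le_max_right a b]

lemma exists_eigenvector_pos_max {V : Type*} [Fintype V] {M : Matrix V V ℝ} {lam : ℝ}
    {x : V → ℝ} (hx : M *ᵥ x = lam • x) (hx0 : x ≠ 0) :
    ∃ y : V → ℝ, M *ᵥ y = lam • y ∧ ∃ i, 0 < y i ∧ ∀ k, y k ≤ y i := by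
  obtain ⟨v, hv⟩ := Function.ne_iff.mp hx0
  have : Nonempty V := ⟨v⟩
  rcases hv.lt_or_gt with hneg | hpos
  · obtain ⟨i, hi⟩ := Finite.exists_max (-x)
    refine ⟨-x, by rw [mulVec_neg, hx, smul_neg], i, ?_, hi⟩
    exact (neg_pos.mpr hneg).trans_le (hi v)
  · obtain ⟨i, hi⟩ := Finite.exists_max x
    exact ⟨x, hx, i, hpos.trans_le (hi v), hi⟩

theorem exists_le_sum_max_of_isMax {V : Type*} [Fintype V] {A : Matrix V V ℝ}
    (hA : ∀ u v, 0 ≤ A u v) {lam : ℝ} {x : V → ℝ}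
    (hx : ∀ u, lam * x u = ∑ k, A u k * (x u - x k)) (hlam : 0 < lam) {i : V}
    (hxi : 0 < x i) (hi : ∀ k, x k ≤ x i) :
    ∃ j, A i j ≠ 0 ∧ lam ≤ ∑ k, max (A i k) (A j k) := by
  classical
  obtain ⟨k₀, -, hk₀⟩ : ∃ k ∈ Finset.univ, 0 < A i k * (x i - x k) := by
    refine Finset.exists_lt_of_sum_lt ?_
    rw [Finset.sum_const_zero, ← hx]
    positivity
  have hAik₀ : A i k₀ ≠ 0 := by rintro h; simp [h] at hk₀
  have hxk₀ : x k₀ < x i := by nlinarith [hA i k₀]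
  set N := Finset.univ.filter (fun k => A i k ≠ 0)
  obtain ⟨j, hjN, hjmin⟩ := N.exists_min_image x ⟨k₀, by simpa [N] using hAik₀⟩
  have hmin : ∀ k, x k < x j → A i k = 0 := fun k hk => by
    by_contra h
    exact (hjmin k (by simpa [N] using h)).not_gt hk
  have hxj : x j < x i := (hjmin k₀ (by simpa [N] using hAik₀)).trans_lt hxk₀
  have hsum : lam * (x i - x j) ≤ (∑ k, max (A i k) (A j k)) * (x i - x j) :=
    calc lam * (x i - x j)
        = ∑ k, (A i k * (x i - x k) + A j k * (x k - x j)) := by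
          rw [mul_sub, hx i, hx j, ← Finset.sum_sub_distrib]
          exact Finset.sum_congr rfl fun k _ => by ring
      _ ≤ (∑ k, max (A i k) (A j k)) * (x i - x j) := by
          rw [Finset.sum_mul]
          exact Finset.sum_le_sum fun k _ =>
            mul_sub_add_mul_sub_le_max_mul (hA j k) hxj.le (hi k) (hmin k)
  exact ⟨j, (Finset.mem_filter.mp hjN).2, le_of_mul_le_mul_right hsum (sub_pos.mpr hxj)⟩

namespace Semigraph

variable {V : Type} [Fintype V] [DecidableEq V] (G : Semigraph V)

lemma pairWeight_nonneg (e : List V) (u v : V) : 0 ≤ G.pairWeight e u v := by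
  unfold pairWeight
  split_ifs <;> positivity

lemma adj_nonneg (u v : V) : 0 ≤ G.adj u v :=
  Finset.sum_nonneg fun e _ => G.pairWeight_nonneg e u v

lemma adjacent_of_adj_ne_zero {u v : V} (h : G.adj u v ≠ 0) : G.Adjacent u v := by
  obtain ⟨e, he, hpw⟩ := Finset.exists_ne_zero_of_sum_ne_zero h
  by_contra hnot
  exact hpw (if_neg fun ⟨hu, hv, huv⟩ => hnot ⟨huv, e, he, hu, hv⟩)

lemma exists_adjacent (hE : G.edges.Nonempty) : ∃ u v, G.Adjacent u v := by
  obtain ⟨e, he⟩ := hE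
  have hcard : 1 < e.toFinset.card := by
    rw [List.toFinset_card_of_nodup (G.nodup e he)]
    exact G.two_le e he
  obtain ⟨u, hu, v, hv, huv⟩ := Finset.one_lt_card.mp hcard
  exact ⟨u, v, huv, e, he, List.mem_toFinset.mp hu, List.mem_toFinset.mp hv⟩

lemma lap_mulVec_apply (x : V → ℝ) (u : V) :
    (G.lap *ᵥ x) u = ∑ k, G.adj u k * (x u - x k) := by
  simp only [lap, mulVec, dotProduct, Matrix.sub_apply, diagonal_apply, sub_mul,
    Finset.sum_sub_distrib, ite_mul, zero_mul, Finset.sum_ite_eq, Finset.mem_univ, if_true,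
    degree, Finset.sum_mul, mul_sub]

lemma commonC_le_sum_min (u v : V) :
    G.commonC u v ≤ ∑ k, min (G.adj u k) (G.adj v k) := by
  have hmin : ∀ k, 0 ≤ min (G.adj u k) (G.adj v k) := fun k =>
    le_min (G.adj_nonneg u k) (G.adj_nonneg v k)
  calc G.commonC u v ≤ ∑ k ∈ Finset.univ \ {u, v}, min (G.adj u k) (G.adj v k) := by
        refine Finset.sum_le_sum fun k _ => ?_
        split_ifs with h
        · rw [h, min_self]
        · exact hmin k
    _ ≤ ∑ k, min (G.adj u k) (G.adj v k) :=
        Finset.sum_le_sum_of_subset_of_nonneg (Finset.subset_univ _) fun k _ _ => hmin k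

lemma sum_max_adj_le (u v : V) :
    ∑ k, max (G.adj u k) (G.adj v k) ≤ G.degree u + G.degree v - G.commonC u v := by
  have hsplit : ∑ k, max (G.adj u k) (G.adj v k) + ∑ k, min (G.adj u k) (G.adj v k)
      = G.degree u + G.degree v := by
    simp only [← Finset.sum_add_distrib, max_add_min, degree]
  linarith [G.commonC_le_sum_min u v]

end Semigraph

theorem stmt11_general {V : Type} [Fintype V] [DecidableEq V] (G : Semigraph V)
    (hE : G.edges.Nonempty) (hL : G.lap.IsHermitian) :
    ∀ i : V, ∃ u v : V, G.Adjacent u v ∧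
      hL.eigenvalues i ≤ G.degree u + G.degree v - G.commonC u v := by
  intro i
  rcases le_or_gt (hL.eigenvalues i) 0 with hle | hpos
  · obtain ⟨u, v, huv⟩ := G.exists_adjacent hE
    have hmax : 0 ≤ ∑ k, max (G.adj u k) (G.adj v k) :=
      Finset.sum_nonneg fun k _ => (G.adj_nonneg u k).trans (le_max_left _ _)
    exact ⟨u, v, huv, hle.trans (hmax.trans (G.sum_max_adj_le u v))⟩
  · have hx0 : ⇑(hL.eigenvectorBasis i) ≠ 0 := by
      simpa using hL.eigenvectorBasis.orthonormal.ne_zero i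
    obtain ⟨y, hy, j, hyj, hj⟩ := exists_eigenvector_pos_max (hL.mulVec_eigenvectorBasis i) hx0
    have hy' : ∀ u, hL.eigenvalues i * y u = ∑ k, G.adj u k * (y u - y k) := fun u => by
      rw [← G.lap_mulVec_apply, hy, Pi.smul_apply, smul_eq_mul]
    obtain ⟨k, hjk, hle⟩ := exists_le_sum_max_of_isMax G.adj_nonneg hy' hpos hyj hj
    exact ⟨j, k, G.adjacent_of_adj_ne_zero hjk, hle.trans (G.sum_max_adj_le j k)⟩

/-- For a connected semigraph with at least one edge, every Laplacian
eigenvalue (in particular the largest, `λ_n`) is at most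
`max_{i ∼ j} (d_i + d_j - C(i,j))`, the maximum running over adjacent pairs. -/
theorem stmt11 {V : Type} [Fintype V] [DecidableEq V] (G : Semigraph V)
    (hG : G.Connected) (hE : G.edges.Nonempty) (hL : G.lap.IsHermitian) :
    ∀ i : V, ∃ u v : V, G.Adjacent u v ∧
      hL.eigenvalues i ≤ G.degree u + G.degree v - G.commonC u v :=
  stmt11_general G hE hL
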